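/- Let A be a unital complex Banach algebra with identity 1, let a, b ∈ A, and let λ ∈ ℂ satisfy ν(a + b − λ·1) < |λ|, where ν denotes the spectral radius. Set b₁ = b − λ·1. Then a + b is invertible in A and for every positive integer n, (a + b)^{−n} = Σ_{k=0}^{∞} C(−n,k) · λ^{−n−k} · (a + b₁)^{k} = Σ_{k=0}^{∞} Σ_{j=0}^{k} C(−n,k) · C(k,j) · λ^{−n−k} · δ_{a+b₁, b₁}^{k−j}(1) · b₁^{j}, where δ_{a+b₁,b₁}(x) = (a+b₁)x − xb₁ and both series converge absolutely in A. -/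

import Mathlib

open Finset
open scoped ENNReal NNReal Topology

private lemma prod_range_add_eq (n k : ℕ) (hn : 1 ≤ n) :
    ∏ i ∈ Finset.range k, (n + i) = (n - 1 + k).choose k * k.factorial := by
  induction k with
  | zero => simp
  | succ k ih =>
    rw [Finset.prod_range_succ, ih]
    have h1 : n - 1 + (k + 1) = (n - 1 + k) + 1 := by omega
    have h2 : n + k = (n - 1 + k) + 1 := by omega
    have h3 := Nat.add_one_mul_choose_eq (n - 1 + k) k
    rw [h1, h2, Nat.factorial_succ]
    calc (n - 1 + k).choose k * k.factorial * (n - 1 + k + 1)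
        = ((n - 1 + k + 1) * (n - 1 + k).choose k) * k.factorial := by ring
    _ = ((n - 1 + k + 1).choose (k + 1) * (k + 1)) * k.factorial := by rw [h3]
    _ = (n - 1 + k + 1).choose (k + 1) * ((k + 1) * k.factorial) := by ring

private lemma hockey (n : ℕ) (hn : 1 ≤ n) (m : ℕ) :
    ∑ k ∈ Finset.range (m + 1), (n - 1 + k).choose k = (n + m).choose m := by
  induction m with
  | zero => simp
  | succ m ih =>
    rw [Finset.sum_range_succ, ih]
    have h1 : n - 1 + (m + 1) = n + m := by omega
    have h2 : n + (m + 1) = (n + m) + 1 := by omega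
    rw [h1, h2, Nat.choose_succ_succ']

private lemma choose_le_pow_succ (m k : ℕ) : (m + k).choose m ≤ (k + 1) ^ m := by
  induction m with
  | zero => simp
  | succ m ih =>
    have hpascal : (m + 1 + k).choose (m + 1)
        = (m + k).choose m + (m + k).choose (m + 1) := by
      have : m + 1 + k = (m + k) + 1 := by omega
      rw [this, Nat.choose_succ_succ']
    have hr := Nat.choose_succ_right_eq (m + k) m
    have hineq : (m + k).choose (m + 1) ≤ (m + k).choose m * k := by
      have hk : m + k - m = k := by omega
      rw [hk] at hr
      nlinarith [hr]
    have hsplit : (m + k).choose m * (k + 1) = (m + k).choose m * k + (m + k).choose m := by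
      ring
    calc (m + 1 + k).choose (m + 1) ≤ (m + k).choose m * (k + 1) := by
          rw [hpascal]; omega
    _ ≤ (k + 1) ^ m * (k + 1) := Nat.mul_le_mul_right _ ih
    _ = (k + 1) ^ (m + 1) := by rw [pow_succ]

private lemma choose_le_pow' (n k : ℕ) (hn : 1 ≤ n) :
    (n - 1 + k).choose k ≤ (k + 1) ^ (n - 1) := by
  have := choose_le_pow_succ (n - 1) k
  rwa [Nat.choose_symm_add] at this

private lemma pow_eq_sum_iterate {A : Type*} [Ring A] [Algebra ℂ A] (c d : A) (k : ℕ) :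
    c ^ k = ∑ j ∈ Finset.range (k + 1),
      (k.choose j) • ((fun x => c * x - x * d)^[k - j] 1 * d ^ j) := by
  set L := LinearMap.mulLeft ℂ c with hL
  set R := LinearMap.mulRight ℂ d with hR
  set D := L - R with hD
  have hDR : Commute R D :=
    ((LinearMap.commute_mulLeft_right (R := ℂ) c d).symm).sub_right (Commute.refl R)
  have hiter : ∀ (m : ℕ) (x : A), (D ^ m) x = (fun x => c * x - x * d)^[m] x := by
    intro m
    induction m with
    | zero => intro x; simp
    | succ m ih =>
      intro x
      rw [pow_succ, Function.iterate_succ_apply, Module.End.mul_apply, ih]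
      congr 1
  have hRD : R + D = L := by rw [hD]; abel
  have hpow := hDR.add_pow' k
  rw [hRD, LinearMap.pow_mulLeft] at hpow
  have happ := LinearMap.congr_fun hpow 1
  rw [LinearMap.mulLeft_apply, mul_one,
    Finset.Nat.sum_antidiagonal_eq_sum_range_succ_mk] at happ
  rw [happ, LinearMap.sum_apply]
  refine Finset.sum_congr rfl fun j hj => ?_
  have hRj : ∀ x : A, (R ^ j) x = x * d ^ j := by
    intro x; rw [hR, LinearMap.pow_mulRight, LinearMap.mulRight_apply]
  simp only [LinearMap.smul_apply, Module.End.mul_apply, hiter, hRj]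


section
variable {A : Type*} [NormedRing A] [NormedAlgebra ℂ A] [CompleteSpace A]

private lemma key_isUnit (c : A) (l : ℂ) (hl : spectralRadius ℂ c < (‖l‖₊ : ℝ≥0∞)) :
    IsUnit (l • (1 : A) + c) := by
  have h1 : spectralRadius ℂ c < (‖(-l)‖₊ : ℝ≥0∞) := by rwa [nnnorm_neg]
  have h2 := spectrum.mem_resolventSet_of_spectralRadius_lt h1
  rw [spectrum.mem_resolventSet_iff] at h2
  have h3 : l • (1 : A) + c = -(algebraMap ℂ A (-l) - c) := by
    rw [Algebra.algebraMap_eq_smul_one, neg_smul, neg_sub, sub_neg_eq_add, add_comm]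
  rw [h3]
  exact h2.neg

private lemma key_norm_eq (c : A) (l : ℂ) (n k : ℕ) :
    ‖(((-1 : ℂ) ^ k * ((n - 1 + k).choose k : ℂ)) * (l⁻¹) ^ (n + k)) • c ^ k‖
      = ((n - 1 + k).choose k : ℝ) * ‖l‖⁻¹ ^ (n + k) * ‖c ^ k‖ := by
  rw [norm_smul, norm_mul, norm_mul, norm_pow, norm_pow, norm_neg, norm_one, one_pow,
    one_mul, norm_inv, Complex.norm_natCast]

private lemma key_summable (c : A) (l : ℂ) (hl : spectralRadius ℂ c < (‖l‖₊ : ℝ≥0∞))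
    (hl0 : l ≠ 0) (n : ℕ) (hn : 1 ≤ n) :
    Summable fun k : ℕ =>
      ((n - 1 + k).choose k : ℝ) * ‖l‖⁻¹ ^ (n + k) * ‖c ^ k‖ := by
  obtain ⟨s, hs1, hs2⟩ := ENNReal.lt_iff_exists_nnreal_btwn.mp hl
  have hspos : 0 < s := by
    have : (0 : ℝ≥0∞) < (s : ℝ≥0∞) := lt_of_le_of_lt (zero_le) hs1
    exact_mod_cast this
  have hlpos : (0 : ℝ) < ‖l‖ := norm_pos_iff.mpr hl0
  have hsl : (s : ℝ) < ‖l‖ := by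
    have := (ENNReal.coe_lt_coe.mp hs2)
    exact_mod_cast this
  -- eventually ‖c ^ k‖ ≤ s ^ k
  have hgel := spectrum.pow_nnnorm_pow_one_div_tendsto_nhds_spectralRadius c
  have hev : ∀ᶠ k : ℕ in Filter.atTop,
      ((‖c ^ k‖₊ : ℝ≥0∞) ^ (1 / (k : ℝ))) < (s : ℝ≥0∞) :=
    hgel.eventually_lt_const hs1
  have hev2 : ∀ᶠ k : ℕ in Filter.atTop, ‖c ^ k‖ ≤ (s : ℝ) ^ k := by
    filter_upwards [hev, Filter.eventually_ge_atTop 1] with k hk hk1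
    have hkpos : (0 : ℝ) < (k : ℝ) := by exact_mod_cast hk1
    have h := ENNReal.rpow_lt_rpow hk hkpos
    rw [← ENNReal.rpow_mul, one_div, inv_mul_cancel₀ (ne_of_gt hkpos), ENNReal.rpow_one,
      ENNReal.rpow_natCast, ← ENNReal.coe_pow, ENNReal.coe_lt_coe] at h
    have := le_of_lt h
    calc ‖c ^ k‖ = ((‖c ^ k‖₊ : ℝ)) := rfl
    _ ≤ ((s ^ k : ℝ≥0) : ℝ) := by exact_mod_cast this
    _ = (s : ℝ) ^ k := by push_cast; ring
  set r : ℝ := (s : ℝ) / ‖l‖ with hr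
  have hrpos : 0 < r := div_pos (by exact_mod_cast hspos) hlpos
  have hr1 : r < 1 := (div_lt_one hlpos).mpr hsl
  have hsum0 : Summable fun k : ℕ => ((k : ℝ)) ^ (n - 1) * r ^ k :=
    summable_pow_mul_geometric_of_norm_lt_one (n - 1)
      (by rw [Real.norm_eq_abs, abs_of_nonneg hrpos.le]; exact hr1)
  have hsum1 : Summable fun k : ℕ => (((k : ℝ)) + 1) ^ (n - 1) * r ^ k := by
    have h2 := (summable_nat_add_iff 1).mpr hsum0
    have h3 := h2.mul_left r⁻¹
    refine h3.congr fun k => ?_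
    push_cast
    rw [pow_succ]
    field_simp
  have hsum2 := hsum1.mul_left (‖l‖⁻¹ ^ n)
  refine Summable.of_norm_bounded_eventually_nat hsum2 ?_
  filter_upwards [hev2] with k hck
  have hnonneg : (0 : ℝ) ≤ ((n - 1 + k).choose k : ℝ) * ‖l‖⁻¹ ^ (n + k) * ‖c ^ k‖ := by
    positivity
  rw [Real.norm_eq_abs, abs_of_nonneg hnonneg]
  have hC : ((n - 1 + k).choose k : ℝ) ≤ ((k : ℝ) + 1) ^ (n - 1) := by
    have := choose_le_pow' n k hn
    calc ((n - 1 + k).choose k : ℝ) ≤ (((k + 1) ^ (n - 1) : ℕ) : ℝ) := by exact_mod_cast this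
    _ = ((k : ℝ) + 1) ^ (n - 1) := by push_cast; ring
  calc ((n - 1 + k).choose k : ℝ) * ‖l‖⁻¹ ^ (n + k) * ‖c ^ k‖
      ≤ ((k : ℝ) + 1) ^ (n - 1) * ‖l‖⁻¹ ^ (n + k) * ((s : ℝ)) ^ k := by
        gcongr
  _ = ‖l‖⁻¹ ^ n * (((k : ℝ) + 1) ^ (n - 1) * r ^ k) := by
        rw [hr, div_pow, pow_add]
        field_simp
        rw [← mul_pow, one_div, inv_mul_cancel₀ hlpos.ne', one_pow]

private lemma key_hasSum (c : A) (l : ℂ) (hl : spectralRadius ℂ c < (‖l‖₊ : ℝ≥0∞))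
    (hl0 : l ≠ 0) (n : ℕ) (hn : 1 ≤ n) :
    HasSum (fun k : ℕ => (((-1 : ℂ) ^ k * ((n - 1 + k).choose k : ℂ)) * (l⁻¹) ^ (n + k)) • c ^ k)
      (Ring.inverse (l • (1 : A) + c) ^ n) := by
  have hunit := key_isUnit c l hl
  have hinv_lt : ((‖l‖₊ : ℝ≥0∞))⁻¹ < (spectralRadius ℂ c)⁻¹ := ENNReal.inv_lt_inv.mpr hl
  obtain ⟨ρ, hρ1, hρ2⟩ := ENNReal.lt_iff_exists_nnreal_btwn.mp hinv_lt
  have hρpos : 0 < ρ := by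
    have h0 : (0 : ℝ≥0∞) < ((‖l‖₊ : ℝ≥0∞))⁻¹ := ENNReal.inv_pos.mpr ENNReal.coe_ne_top
    exact_mod_cast h0.trans hρ1
  have H₁ := (spectrum.differentiableOn_inverse_one_sub_smul hρ2).hasFPowerSeriesOnBall hρpos
  have hball := (spectrum.hasFPowerSeriesOnBall_inverse_one_sub_smul ℂ c).exchange_radius H₁
  have hy : (-l⁻¹) ∈ Metric.eball (0 : ℂ) (ρ : ℝ≥0∞) := by
    rw [mem_emetric_ball_zero_iff, enorm_eq_nnnorm, nnnorm_neg, nnnorm_inv,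
      ENNReal.coe_inv (nnnorm_ne_zero_iff.mpr hl0)]
    exact hρ1
  have hsum1 := hball.hasSum hy
  simp only [ContinuousMultilinearMap.mkPiRing_apply, Finset.prod_const, Finset.card_univ,
    Fintype.card_fin, zero_add] at hsum1
  set u : A := 1 + l⁻¹ • c with hudef
  have h1u : (1 : A) - (-l⁻¹) • c = u := by rw [neg_smul, sub_neg_eq_add]
  have hlu : l • u = l • (1 : A) + c := by
    rw [hudef, smul_add, smul_smul, mul_inv_cancel₀ hl0, one_smul]
  have hu : IsUnit u := by
    have h2 : u = l⁻¹ • (l • (1 : A) + c) := by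
      rw [← hlu, smul_smul, inv_mul_cancel₀ hl0, one_smul]
    rw [h2, Algebra.smul_def]
    exact ((isUnit_iff_ne_zero.mpr (inv_ne_zero hl0)).map (algebraMap ℂ A)).mul hunit
  have hmulr : (l • (1 : A) + c) * (l⁻¹ • Ring.inverse u) = 1 := by
    rw [← hlu, smul_mul_smul_comm, mul_inv_cancel₀ hl0, Ring.mul_inverse_cancel u hu, one_smul]
  have hRinv : Ring.inverse (l • (1 : A) + c) = l⁻¹ • Ring.inverse u := by
    calc Ring.inverse (l • (1 : A) + c)
        = Ring.inverse (l • (1 : A) + c) * ((l • (1 : A) + c) * (l⁻¹ • Ring.inverse u)) := by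
          rw [hmulr, mul_one]
    _ = (Ring.inverse (l • (1 : A) + c) * (l • (1 : A) + c)) * (l⁻¹ • Ring.inverse u) := by
          rw [mul_assoc]
    _ = l⁻¹ • Ring.inverse u := by rw [Ring.inverse_mul_cancel _ hunit, one_mul]
  have hbase : HasSum
      (fun k : ℕ => (((-1 : ℂ) ^ k * ((1 - 1 + k).choose k : ℂ)) * (l⁻¹) ^ (1 + k)) • c ^ k)
      (Ring.inverse (l • (1 : A) + c) ^ 1) := by
    rw [pow_one, hRinv]
    rw [h1u] at hsum1
    have hf := hsum1.const_smul (l⁻¹)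
    have hfe : (fun k : ℕ => (((-1 : ℂ) ^ k * ((1 - 1 + k).choose k : ℂ)) * (l⁻¹) ^ (1 + k)) • c ^ k)
        = fun k : ℕ => l⁻¹ • ((-l⁻¹) ^ k • c ^ k) := by
      funext k
      rw [smul_smul]
      congr 1
      have h0 : 1 - 1 + k = k := by omega
      rw [h0, Nat.choose_self, Nat.cast_one, mul_one, neg_pow, pow_add, pow_one]
      ring
    rw [hfe]
    exact hf
  induction n, hn using Nat.le_induction with
  | base => exact hbase
  | succ n hn ih =>
    have hfn : Summable (fun k : ℕ =>
        ‖(((-1 : ℂ) ^ k * ((n - 1 + k).choose k : ℂ)) * (l⁻¹) ^ (n + k)) • c ^ k‖) := by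
      simp only [key_norm_eq]
      exact key_summable c l hl hl0 n hn
    have hf1 : Summable (fun k : ℕ =>
        ‖(((-1 : ℂ) ^ k * ((1 - 1 + k).choose k : ℂ)) * (l⁻¹) ^ (1 + k)) • c ^ k‖) := by
      simp only [key_norm_eq]
      exact key_summable c l hl hl0 1 le_rfl
    have hprod := tsum_mul_tsum_eq_tsum_sum_range_of_summable_norm hfn hf1
    have hcauchy := summable_norm_sum_mul_range_of_summable_norm hfn hf1
    have hinner : ∀ m : ℕ, (∑ k ∈ Finset.range (m + 1),
        ((((-1 : ℂ) ^ k * ((n - 1 + k).choose k : ℂ)) * (l⁻¹) ^ (n + k)) • c ^ k) *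
          ((((-1 : ℂ) ^ (m - k) * ((1 - 1 + (m - k)).choose (m - k) : ℂ)) * (l⁻¹) ^ (1 + (m - k)))
            • c ^ (m - k)))
        = (((-1 : ℂ) ^ m * ((n + 1 - 1 + m).choose m : ℂ)) * (l⁻¹) ^ (n + 1 + m)) • c ^ m := by
      intro m
      have hstep : ∀ k ∈ Finset.range (m + 1),
          ((((-1 : ℂ) ^ k * ((n - 1 + k).choose k : ℂ)) * (l⁻¹) ^ (n + k)) • c ^ k) *
            ((((-1 : ℂ) ^ (m - k) * ((1 - 1 + (m - k)).choose (m - k) : ℂ)) *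
              (l⁻¹) ^ (1 + (m - k))) • c ^ (m - k))
          = (((-1 : ℂ) ^ m * ((n - 1 + k).choose k : ℂ)) * (l⁻¹) ^ (n + 1 + m)) • c ^ m := by
        intro k hk
        have hk' : k ≤ m := by
          have := Finset.mem_range.mp hk; omega
        have e1 : k + (m - k) = m := by omega
        have e2 : (n + k) + (1 + (m - k)) = n + 1 + m := by omega
        rw [smul_mul_smul_comm, ← pow_add c, e1]
        congr 1
        have h0 : 1 - 1 + (m - k) = m - k := by omega
        rw [h0, Nat.choose_self, Nat.cast_one, mul_one]
        rw [show ((-1 : ℂ)) ^ m = ((-1 : ℂ)) ^ k * ((-1 : ℂ)) ^ (m - k) by rw [← pow_add, e1],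
          show ((l⁻¹ : ℂ)) ^ (n + 1 + m) = (l⁻¹) ^ (n + k) * (l⁻¹) ^ (1 + (m - k)) by
            rw [← pow_add, e2]]
        ring
      rw [Finset.sum_congr rfl hstep, ← Finset.sum_smul]
      congr 1
      rw [← Finset.sum_mul, ← Finset.mul_sum]
      have hsumC : ∑ k ∈ Finset.range (m + 1), ((n - 1 + k).choose k : ℂ)
          = (((n + m).choose m : ℕ) : ℂ) := by
        rw [← Nat.cast_sum]
        exact_mod_cast congrArg (Nat.cast : ℕ → ℂ) (hockey n hn m)
      rw [hsumC]
      have : n + 1 - 1 + m = n + m := by omega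
      rw [this]
    have hSf : Summable (fun m : ℕ =>
        (((-1 : ℂ) ^ m * ((n + 1 - 1 + m).choose m : ℂ)) * (l⁻¹) ^ (n + 1 + m)) • c ^ m) := by
      have h4 := hcauchy.of_norm
      exact h4.congr hinner
    have htsum : (∑' m : ℕ,
        (((-1 : ℂ) ^ m * ((n + 1 - 1 + m).choose m : ℂ)) * (l⁻¹) ^ (n + 1 + m)) • c ^ m)
        = Ring.inverse (l • (1 : A) + c) ^ (n + 1) := by
      rw [← tsum_congr hinner, ← hprod, ih.tsum_eq, hbase.tsum_eq, ← pow_add]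
    exact (Summable.hasSum_iff hSf).mpr htsum

private lemma scalar_eq (l : ℂ) (n : ℕ) (hn : 1 ≤ n) (k : ℕ) :
    ((-1 : ℂ) ^ k * ∏ i ∈ Finset.range k, (n + i : ℂ)) / (k.factorial : ℂ) *
      l ^ (-(n : ℤ) - (k : ℤ))
    = ((-1 : ℂ) ^ k * ((n - 1 + k).choose k : ℂ)) * (l⁻¹) ^ (n + k) := by
  have hprod : (∏ i ∈ Finset.range k, ((n : ℂ) + (i : ℂ)))
      = (((n - 1 + k).choose k * k.factorial : ℕ) : ℂ) := by
    rw [← prod_range_add_eq n k hn]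
    push_cast
    rfl
  have hz : l ^ (-(n : ℤ) - (k : ℤ)) = (l⁻¹) ^ (n + k) := by
    have he : (-(n : ℤ) - (k : ℤ)) = -((n + k : ℕ) : ℤ) := by push_cast; ring
    rw [he, zpow_neg, zpow_natCast, ← inv_pow]
  have hf : ((k.factorial : ℕ) : ℂ) ≠ 0 := Nat.cast_ne_zero.mpr k.factorial_ne_zero
  rw [hprod, hz]
  push_cast
  rw [mul_div_assoc, mul_div_cancel_right₀ _ hf]

end

/-- Let `A` be a unital complex Banach algebra, `a b ∈ A`, `λ ∈ ℂ` with
`ν(a + b - λ·1) < |λ|` (spectral radius) and set `b₁ = b - λ·1`. Then `a + b` is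
invertible and, for every `n ≥ 1`,
`(a+b)⁻ⁿ = ∑_{k=0}^∞ C(-n,k) λ^{-n-k} (a+b₁)ᵏ
        = ∑_{k=0}^∞ ∑_{j=0}^{k} C(-n,k) C(k,j) λ^{-n-k} δ_{a+b₁,b₁}^{k-j}(1) b₁ʲ`,
where `C(-n,k) = (-1)ᵏ n(n+1)⋯(n+k-1)/k!`, `δ_{a+b₁,b₁}(x) = (a+b₁)x - xb₁`, and
both series converge absolutely. -/
theorem inv_pow_add_eq_tsum_negBinomial
    {A : Type*} [NormedRing A] [NormedAlgebra ℂ A] [CompleteSpace A]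
    (a b : A) (l : ℂ) (hl : spectralRadius ℂ (a + b - l • (1 : A)) < (‖l‖₊ : ENNReal))
    (b₁ : A) (hb₁ : b₁ = b - l • (1 : A)) (n : ℕ) (hn : 1 ≤ n) :
    IsUnit (a + b) ∧
    (Summable fun k : ℕ =>
      ‖(((-1 : ℂ) ^ k * ∏ i ∈ Finset.range k, (n + i : ℂ)) / (k.factorial : ℂ) *
          l ^ (-(n : ℤ) - (k : ℤ))) • (a + b₁) ^ k‖) ∧
    Ring.inverse (a + b) ^ n =
      ∑' k : ℕ,
        (((-1 : ℂ) ^ k * ∏ i ∈ Finset.range k, (n + i : ℂ)) / (k.factorial : ℂ) *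
          l ^ (-(n : ℤ) - (k : ℤ))) • (a + b₁) ^ k ∧
    (Summable fun k : ℕ =>
      ‖∑ j ∈ Finset.range (k + 1),
        (((-1 : ℂ) ^ k * ∏ i ∈ Finset.range k, (n + i : ℂ)) / (k.factorial : ℂ) *
            (k.choose j : ℂ) * l ^ (-(n : ℤ) - (k : ℤ))) •
          ((fun x => (a + b₁) * x - x * b₁)^[k - j] 1 * b₁ ^ j)‖) ∧
    Ring.inverse (a + b) ^ n =
      ∑' k : ℕ, ∑ j ∈ Finset.range (k + 1),
        (((-1 : ℂ) ^ k * ∏ i ∈ Finset.range k, (n + i : ℂ)) / (k.factorial : ℂ) *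
            (k.choose j : ℂ) * l ^ (-(n : ℤ) - (k : ℤ))) •
          ((fun x => (a + b₁) * x - x * b₁)^[k - j] 1 * b₁ ^ j) := by
  have hl0 : l ≠ 0 := by
    rintro rfl
    simp only [nnnorm_zero, ENNReal.coe_zero, not_lt_zero'] at hl
  set c : A := a + b₁ with hc
  have hceq : c = a + b - l • (1 : A) := by rw [hc, hb₁]; abel
  have hl' : spectralRadius ℂ c < (‖l‖₊ : ℝ≥0∞) := by rw [hceq]; exact hl
  have hab : a + b = l • (1 : A) + c := by rw [hc, hb₁]; abel
  have hsc : ∀ k : ℕ,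
      ((-1 : ℂ) ^ k * ∏ i ∈ Finset.range k, (n + i : ℂ)) / (k.factorial : ℂ) *
        l ^ (-(n : ℤ) - (k : ℤ))
      = ((-1 : ℂ) ^ k * ((n - 1 + k).choose k : ℂ)) * (l⁻¹) ^ (n + k) :=
    fun k => scalar_eq l n hn k
  have hsummable : Summable (fun k : ℕ =>
      ‖(((-1 : ℂ) ^ k * ((n - 1 + k).choose k : ℂ)) * (l⁻¹) ^ (n + k)) • c ^ k‖) := by
    simp only [key_norm_eq]
    exact key_summable c l hl' hl0 n hn
  have hhs := key_hasSum c l hl' hl0 n hn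
  have hpt : ∀ k : ℕ, (∑ j ∈ Finset.range (k + 1),
      (((-1 : ℂ) ^ k * ∏ i ∈ Finset.range k, (n + i : ℂ)) / (k.factorial : ℂ) *
          (k.choose j : ℂ) * l ^ (-(n : ℤ) - (k : ℤ))) •
        ((fun x => c * x - x * b₁)^[k - j] 1 * b₁ ^ j))
      = (((-1 : ℂ) ^ k * ∏ i ∈ Finset.range k, (n + i : ℂ)) / (k.factorial : ℂ) *
          l ^ (-(n : ℤ) - (k : ℤ))) • c ^ k := by
    intro k
    have hpow := pow_eq_sum_iterate c b₁ k
    calc (∑ j ∈ Finset.range (k + 1),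
        (((-1 : ℂ) ^ k * ∏ i ∈ Finset.range k, (n + i : ℂ)) / (k.factorial : ℂ) *
            (k.choose j : ℂ) * l ^ (-(n : ℤ) - (k : ℤ))) •
          ((fun x => c * x - x * b₁)^[k - j] 1 * b₁ ^ j))
        = ∑ j ∈ Finset.range (k + 1),
          (((-1 : ℂ) ^ k * ∏ i ∈ Finset.range k, (n + i : ℂ)) / (k.factorial : ℂ) *
              l ^ (-(n : ℤ) - (k : ℤ))) •
            ((k.choose j : ℕ) • ((fun x => c * x - x * b₁)^[k - j] 1 * b₁ ^ j)) := by
          refine Finset.sum_congr rfl fun j hj => ?_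
          rw [← Nat.cast_smul_eq_nsmul ℂ, smul_smul]
          congr 1
          ring
    _ = (((-1 : ℂ) ^ k * ∏ i ∈ Finset.range k, (n + i : ℂ)) / (k.factorial : ℂ) *
            l ^ (-(n : ℤ) - (k : ℤ))) •
          (∑ j ∈ Finset.range (k + 1),
            (k.choose j : ℕ) • ((fun x => c * x - x * b₁)^[k - j] 1 * b₁ ^ j)) := by
          rw [Finset.smul_sum]
    _ = _ := by rw [← hpow]
  refine ⟨?_, ?_, ?_, ?_, ?_⟩
  · rw [hab]; exact key_isUnit c l hl'
  · simp only [hsc]; exact hsummable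
  · rw [hab, ← hhs.tsum_eq]
    exact (tsum_congr fun k => by rw [hsc]).symm
  · refine hsummable.congr fun k => ?_
    rw [hpt k, hsc k]
  · rw [hab, ← hhs.tsum_eq]
    refine (tsum_congr fun k => ?_).symm
    rw [hpt k, hsc]
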